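/- Let f : ℝⁿ → ℝᵐ be twice continuously differentiable, let y ∈ ℝᵐ, and let θ* ∈ ℝⁿ. Suppose that for all v ∈ ℝⁿ one has D²E(θ*)(v, v) − ‖Df(θ*)v‖² ≥ 0 (i.e. S = ∇²E(θ*) − J(θ*)ᵀJ(θ*) is positive semidefinite). Then for every α ≥ 0 and every v ∈ ℝⁿ, D²E_α(θ*)(v, v) ≥ 0; that is, the Hessian of the α-expanded objective at θ* is positive semidefinite for all α ≥ 0. -/

import Mathlib

/-!
The Hessian of `½‖c − f θ‖²` is `‖Df v‖² + ⟪f θ − c, D²f(v, v)⟫`. Moving the target from `y` to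
`ŷ = y + α (y − f θ*)` scales the residual at `θ*` by `1 + α`, so the Hessian of `E_α` at `θ*` is
`‖Df v‖² + (1 + α) S(v, v)`, a sum of two nonnegative terms.
-/

open scoped RealInnerProductSpace

/-- The least-squares objective `E(θ) = ½‖y − f(θ)‖²`. -/
noncomputable def lsE {n m : ℕ} (f : EuclideanSpace ℝ (Fin n) → EuclideanSpace ℝ (Fin m))
    (y : EuclideanSpace ℝ (Fin m)) (θ : EuclideanSpace ℝ (Fin n)) : ℝ :=
  (1 / 2) * ‖y - f θ‖ ^ 2

/-- The `α`-expanded objective at the point `θs`: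
`E_α(θ) = ½‖ŷ − f(θ)‖²` with `ŷ = y + α • (y − f(θs))`. -/
noncomputable def lsEexp {n m : ℕ} (f : EuclideanSpace ℝ (Fin n) → EuclideanSpace ℝ (Fin m))
    (y : EuclideanSpace ℝ (Fin m)) (θs : EuclideanSpace ℝ (Fin n)) (α : ℝ)
    (θ : EuclideanSpace ℝ (Fin n)) : ℝ :=
  (1 / 2) * ‖(y + α • (y - f θs)) - f θ‖ ^ 2

section

variable {E F : Type*} [NormedAddCommGroup E] [NormedSpace ℝ E]
  [NormedAddCommGroup F] [InnerProductSpace ℝ F] {f : E → F}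

theorem fderiv_half_norm_sub_sq (hf : Differentiable ℝ f) (c : F) :
    fderiv ℝ (fun θ => (1 / 2 : ℝ) * ‖c - f θ‖ ^ 2)
      = fun θ => (innerSL ℝ (f θ - c)).comp (fderiv ℝ f θ) := by
  funext θ
  refine (((hf θ).hasFDerivAt.const_sub c).norm_sq.const_mul (1 / 2 : ℝ)).fderiv.trans ?_
  ext w
  simp only [smul_apply, ContinuousLinearMap.comp_apply, neg_apply, innerSL_apply_apply,
    smul_eq_mul, inner_neg_right, ← neg_sub (f θ) c, inner_neg_left]
  ring

theorem hessian_half_norm_sub_sq (hf : ContDiff ℝ 2 f) (c : F) (θ v : E) :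
    fderiv ℝ (fderiv ℝ (fun θ => (1 / 2 : ℝ) * ‖c - f θ‖ ^ 2)) θ v v
      = ‖fderiv ℝ f θ v‖ ^ 2 + ⟪f θ - c, fderiv ℝ (fderiv ℝ f) θ v v⟫ := by
  have hdf : Differentiable ℝ (fderiv ℝ f) :=
    (hf.fderiv_right (by norm_num)).differentiable one_ne_zero
  have hinner : HasFDerivAt (fun θ => innerSL ℝ (f θ - c))
      ((innerSL ℝ).comp (fderiv ℝ f θ)) θ :=
    (innerSL ℝ).hasFDerivAt.comp θ
      ((hf.differentiable (by norm_num) θ).hasFDerivAt.sub_const c)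
  rw [fderiv_half_norm_sub_sq (hf.differentiable (by norm_num)) c,
    (hinner.clm_comp (hdf θ).hasFDerivAt).fderiv]
  simp only [add_apply, ContinuousLinearMap.comp_apply, ContinuousLinearMap.compL_apply,
    ContinuousLinearMap.flip_apply, innerSL_apply_apply, real_inner_self_eq_norm_sq]
  ring

end

theorem stmt_4 {n m : ℕ} (f : EuclideanSpace ℝ (Fin n) → EuclideanSpace ℝ (Fin m))
    (y : EuclideanSpace ℝ (Fin m)) (θs : EuclideanSpace ℝ (Fin n))
    (hf : ContDiff ℝ 2 f)
    (hS : ∀ v : EuclideanSpace ℝ (Fin n),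
      0 ≤ fderiv ℝ (fderiv ℝ (lsE f y)) θs v v - ‖fderiv ℝ f θs v‖ ^ 2) :
    ∀ α : ℝ, 0 ≤ α → ∀ v : EuclideanSpace ℝ (Fin n),
      0 ≤ fderiv ℝ (fderiv ℝ (lsEexp f y θs α)) θs v v := by
  intro α hα v
  have hE := hessian_half_norm_sub_sq hf y θs v
  have hEα := hessian_half_norm_sub_sq hf (y + α • (y - f θs)) θs v
  have hresidual : f θs - (y + α • (y - f θs)) = (1 + α) • (f θs - y) := by module
  rw [hresidual, real_inner_smul_left] at hEα
  calc (0 : ℝ)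
      ≤ ‖fderiv ℝ f θs v‖ ^ 2
          + (1 + α) * (fderiv ℝ (fderiv ℝ (lsE f y)) θs v v - ‖fderiv ℝ f θs v‖ ^ 2) :=
        add_nonneg (sq_nonneg _) (mul_nonneg (by linarith) (hS v))
    _ = fderiv ℝ (fderiv ℝ (lsEexp f y θs α)) θs v v := by
        unfold lsE lsEexp
        rw [hE, hEα]
        ring
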